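/- arXiv:2208.02359 — 3 statements merged into one kernel-verified Lean document; each statement's English description precedes it below -/
import Mathlib

section
/- Let R : ℝ → ℝ be the continuous function given by R(x) = (sin(πx)/(πx))² · 1/(1 − x²) for x ∉ {0, 1, −1}, with R(0) = 1 and R(±1) = 0 (the removable singularities filled in by continuity). Then R ∈ L¹(ℝ) and its Fourier transform R̂(t) = ∫_ℝ R(x) e^{−2πitx} dx equals 1 − |t| + sin(2π|t|)/(2π) for |t| ≤ 1 and equals 0 for |t| > 1. -/
/-! `R` is the Fourier transform of `selbergRHat`, the even continuous function supported on
`[-1, 1]` that equals `1 - |t| + sin(2π|t|)/(2π)` there. Indeed its Fourier transform at `x` is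
`2 ∫₀¹ (1 - t + sin(2πt)/(2π)) cos(2πxt) dt`, and writing `sin(2πt) cos(2πxt)` as a sum of two
sines reduces this to elementary integrals adding up to `R(x)`. So `R` is continuous as the
Fourier transform of an `L¹` function, integrable because `|R(x)| ≤ (1 + x²)⁻¹` for `|x| ≥ 2`,
and Fourier inversion for the even function `selbergRHat` gives `R̂ = selbergRHat`. -/

open MeasureTheory
open scoped Real FourierTransform

noncomputable section

/-- Selberg's function `R(x) = (sin(πx)/(πx))² / (1 - x²)`, with the removable
singularities at `x = 0` (value `1`) and `x = ±1` (value `0`) filled in by continuity. -/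
def selbergR (x : ℝ) : ℝ :=
  if x = 0 then 1
  else if x = 1 ∨ x = -1 then 0
  else (Real.sin (π * x) / (π * x)) ^ 2 * (1 / (1 - x ^ 2))

theorem Continuous.fourier_fourier_eq_of_even {V E : Type*} [NormedAddCommGroup V]
    [InnerProductSpace ℝ V] [MeasurableSpace V] [BorelSpace V] [FiniteDimensional ℝ V]
    [NormedAddCommGroup E] [NormedSpace ℂ E] [CompleteSpace E] {f : V → E}
    (hc : Continuous f) (hf : Integrable f) (h'f : Integrable (𝓕 f)) (heven : ∀ v, f (-v) = f v) :
    𝓕 (𝓕 f) = f := by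
  ext w
  rw [← heven, ← neg_neg w, ← Real.fourierInv_eq_fourier_neg, hc.fourierInv_fourier_eq hf h'f,
    neg_neg]

theorem Real.fourier_ofReal_eq_two_mul_integral_cos {g : ℝ → ℝ} {a : ℝ} (hg : Continuous g)
    (heven : ∀ v, g (-v) = g v) (hsupp : Function.support g ⊆ Set.Icc (-a) a) (ha : 0 ≤ a)
    (x : ℝ) :
    𝓕 (fun v ↦ (g v : ℂ)) x = ↑(2 * ∫ v in (0 : ℝ)..a, g v * Real.cos (2 * π * x * v)) := by
  set F : ℝ → ℂ := fun v ↦ Complex.exp (↑(-2 * π * v * x) * Complex.I) • (g v : ℂ)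
  have hF : Continuous F := by fun_prop
  have hF_even : ∀ v, F (-v) + F v = ↑(2 * (g v * Real.cos (2 * π * x * v))) := by
    intro v
    simp only [F, smul_eq_mul, heven, ← add_mul]
    push_cast
    rw [Complex.cos]
    ring_nf
  have hF_support : ∀ v ∉ Set.Icc (-a) a, F v = 0 := fun v hv ↦ by
    simp [F, Function.notMem_support.mp (mt (@hsupp v) hv)]
  have hF_neg : IntervalIntegrable (fun v ↦ F (-v)) volume 0 a :=
    (hF.comp continuous_neg).intervalIntegrable _ _
  calc 𝓕 (fun v ↦ (g v : ℂ)) x = ∫ v in -a..a, F v := by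
        rw [Real.fourier_real_eq_integral_exp_smul,
          ← setIntegral_eq_integral_of_forall_compl_eq_zero hF_support,
          integral_Icc_eq_integral_Ioc, intervalIntegral.integral_of_le (by linarith)]
    _ = ∫ v in (0 : ℝ)..a, (F (-v) + F v) := by
        rw [← intervalIntegral.integral_add_adjacent_intervals (b := 0)
          (hF.intervalIntegrable _ _) (hF.intervalIntegrable _ _),
          intervalIntegral.integral_add hF_neg (hF.intervalIntegrable _ _),
          intervalIntegral.integral_comp_neg, neg_zero]
    _ = _ := by
        simp_rw [hF_even, intervalIntegral.integral_ofReal, intervalIntegral.integral_const_mul]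

theorem integral_sin_mul (a b c : ℝ) :
    ∫ t in a..b, Real.sin (c * t) = (Real.cos (c * a) - Real.cos (c * b)) / c := by
  rcases eq_or_ne c 0 with rfl | hc
  · simp
  · rw [intervalIntegral.integral_comp_mul_left _ hc, integral_sin, smul_eq_mul, inv_mul_eq_div]

theorem integral_one_sub_mul_cos_mul {b : ℝ} (hb : b ≠ 0) :
    ∫ t in (0 : ℝ)..1, (1 - t) * Real.cos (b * t) = (1 - Real.cos b) / b ^ 2 := by
  have hderiv : ∀ t, HasDerivAt
      (fun u ↦ (1 - u) * Real.sin (b * u) / b - Real.cos (b * u) / b ^ 2)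
      ((1 - t) * Real.cos (b * t)) t := by
    intro t
    have hbt := (hasDerivAt_id t).const_mul b
    refine ((((hasDerivAt_id t).const_sub 1).mul hbt.sin).div_const b |>.sub
      (hbt.cos.div_const (b ^ 2))).congr_deriv ?_
    simp only [id, mul_one]
    field_simp
    ring
  rw [intervalIntegral.integral_eq_sub_of_hasDerivAt (fun t _ ↦ hderiv t)
    (Continuous.intervalIntegrable (by fun_prop) _ _)]
  simp
  ring

def selbergProfile (t : ℝ) : ℝ := 1 - t + Real.sin (2 * π * t) / (2 * π)

theorem continuous_selbergProfile : Continuous selbergProfile := by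
  unfold selbergProfile
  fun_prop

theorem selbergProfile_one : selbergProfile 1 = 0 := by
  simp [selbergProfile]

theorem integral_selbergProfile_mul_cos_mul {b : ℝ} (hb : b ≠ 0) :
    ∫ t in (0 : ℝ)..1, selbergProfile t * Real.cos (b * t) =
      (1 - Real.cos b) / b ^ 2 +
        ((1 - Real.cos b) / (2 * π + b) + (1 - Real.cos b) / (2 * π - b)) / (4 * π) := by
  have hsplit : ∀ t, selbergProfile t * Real.cos (b * t) =
      (1 - t) * Real.cos (b * t) +
        (Real.sin ((2 * π + b) * t) + Real.sin ((2 * π - b) * t)) / (4 * π) := by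
    intro t
    rw [selbergProfile, add_mul (2 * π) b t, sub_mul (2 * π) b t]
    linear_combination Real.two_mul_sin_mul_cos (2 * π * t) (b * t) / (4 * π)
  simp_rw [hsplit]
  rw [intervalIntegral.integral_add (Continuous.intervalIntegrable (by fun_prop) _ _)
      (Continuous.intervalIntegrable (by fun_prop) _ _), intervalIntegral.integral_div,
    intervalIntegral.integral_add (Continuous.intervalIntegrable (by fun_prop) _ _)
      (Continuous.intervalIntegrable (by fun_prop) _ _),
    integral_one_sub_mul_cos_mul hb, integral_sin_mul, integral_sin_mul]
  simp only [mul_zero, mul_one, Real.cos_zero, add_comm (2 * π) b, Real.cos_add_two_pi,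
    Real.cos_two_pi_sub]

-- At `x = ±1` the right-hand side vanishes through `1 / 0 = 0`.
theorem selbergR_of_ne_zero {x : ℝ} (hx : x ≠ 0) :
    selbergR x = (Real.sin (π * x) / (π * x)) ^ 2 * (1 / (1 - x ^ 2)) := by
  rw [selbergR, if_neg hx]
  split_ifs with h
  · rcases h with rfl | rfl <;> simp
  · rfl

theorem integral_selbergProfile_mul_cos (x : ℝ) :
    ∫ t in (0 : ℝ)..1, selbergProfile t * Real.cos (2 * π * x * t) = selbergR x / 2 := by
  rcases eq_or_ne x 0 with rfl | hx
  · simp only [selbergProfile, mul_zero, zero_mul, Real.cos_zero, mul_one]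
    rw [intervalIntegral.integral_add (Continuous.intervalIntegrable (by fun_prop) _ _)
      (Continuous.intervalIntegrable (by fun_prop) _ _), intervalIntegral.integral_div,
      integral_sin_mul, intervalIntegral.integral_sub intervalIntegrable_const
      intervalIntegral.intervalIntegrable_id]
    norm_num [selbergR, integral_id]
  rw [integral_selbergProfile_mul_cos_mul (by positivity), selbergR_of_ne_zero hx]
  by_cases hx1 : x = 1 ∨ x = -1
  · rcases hx1 with rfl | rfl <;> simp
  have h1 : 1 - x ≠ 0 := fun h ↦ hx1 (Or.inl (by linarith))
  have h2 : 1 + x ≠ 0 := fun h ↦ hx1 (Or.inr (by linarith))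
  have h12 : 1 - x ^ 2 ≠ 0 := by
    rw [show 1 - x ^ 2 = (1 - x) * (1 + x) by ring]
    exact mul_ne_zero h1 h2
  have hcos : Real.cos (2 * π * x) = 1 - 2 * Real.sin (π * x) ^ 2 := by
    rw [mul_assoc, Real.cos_two_mul, Real.cos_sq']
    ring
  have hπ : π ≠ 0 := Real.pi_ne_zero
  rw [hcos]
  field_simp
  ring

def selbergRHat (t : ℝ) : ℝ :=
  if |t| ≤ 1 then selbergProfile |t| else 0

theorem selbergRHat_neg (t : ℝ) : selbergRHat (-t) = selbergRHat t := by
  simp [selbergRHat]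

theorem selbergRHat_eq_zero_of_one_le_abs {t : ℝ} (ht : 1 ≤ |t|) : selbergRHat t = 0 := by
  rcases ht.eq_or_lt with ht | ht
  · simp [selbergRHat, ← ht, selbergProfile_one]
  · simp [selbergRHat, ht.not_ge]

theorem support_selbergRHat_subset : Function.support selbergRHat ⊆ Set.Icc (-1) 1 := by
  intro t ht
  rw [Set.mem_Icc, ← abs_le]
  by_contra h
  exact ht (selbergRHat_eq_zero_of_one_le_abs (not_le.mp h).le)

theorem continuous_selbergRHat : Continuous selbergRHat :=
  Continuous.if_le (continuous_selbergProfile.comp continuous_abs) continuous_const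
    continuous_abs continuous_const fun t ht ↦ by simp [ht, selbergProfile_one]

theorem integrable_selbergRHat : Integrable selbergRHat :=
  continuous_selbergRHat.integrable_of_hasCompactSupport <| HasCompactSupport.intro isCompact_Icc
    fun _ ht ↦ Function.notMem_support.mp (mt (@support_selbergRHat_subset _) ht)

theorem fourier_selbergRHat (x : ℝ) : 𝓕 (fun t ↦ (selbergRHat t : ℂ)) x = selbergR x := by
  have hprofile : Set.EqOn (fun t ↦ selbergRHat t * Real.cos (2 * π * x * t))
      (fun t ↦ selbergProfile t * Real.cos (2 * π * x * t)) (Set.uIcc 0 1) := by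
    intro t ht
    rw [Set.uIcc_of_le zero_le_one] at ht
    simp [selbergRHat, abs_of_nonneg ht.1, ht.2]
  rw [Real.fourier_ofReal_eq_two_mul_integral_cos continuous_selbergRHat selbergRHat_neg
    support_selbergRHat_subset zero_le_one, intervalIntegral.integral_congr hprofile,
    integral_selbergProfile_mul_cos]
  push_cast
  ring

theorem continuous_selbergR : Continuous selbergR := by
  have h : Continuous (𝓕 fun t ↦ (selbergRHat t : ℂ)) :=
    VectorFourier.fourierIntegral_continuous Real.continuous_fourierChar continuous_inner
      integrable_selbergRHat.ofReal
  exact (Complex.continuous_re.comp h).congr fun x ↦ by simp [fourier_selbergRHat]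

theorem abs_selbergR_le_of_two_le_abs {x : ℝ} (hx : 2 ≤ |x|) :
    |selbergR x| ≤ (1 + x ^ 2)⁻¹ := by
  have hx2 : 4 ≤ x ^ 2 := by nlinarith [sq_abs x]
  have hx0 : x ≠ 0 := by rintro rfl; norm_num at hx2
  have hπ : 3 < π := Real.pi_gt_three
  have hD : 0 < π ^ 2 * x ^ 2 * (x ^ 2 - 1) := by
    have := sq_pos_of_ne_zero hx0
    have : (0 : ℝ) < x ^ 2 - 1 := by linarith
    positivity
  have hR : selbergR x = -(Real.sin (π * x) ^ 2 / (π ^ 2 * x ^ 2 * (x ^ 2 - 1))) := by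
    have : x ^ 2 - 1 ≠ 0 := by linarith
    rw [selbergR_of_ne_zero hx0, show 1 - x ^ 2 = -(x ^ 2 - 1) by ring]
    field_simp
  rw [hR, abs_neg, abs_of_nonneg (by positivity), inv_eq_one_div,
    div_le_div_iff₀ hD (by positivity)]
  have hsin := Real.sin_sq_le_one (π * x)
  have hπ2 : 9 ≤ π ^ 2 := by nlinarith
  nlinarith [mul_le_mul_of_nonneg_right hsin (by positivity : (0 : ℝ) ≤ 1 + x ^ 2),
    mul_le_mul hπ2 (by linarith : 3 ≤ x ^ 2 - 1) (by norm_num) (by positivity)]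

theorem selbergR_isBigO_inv_one_add_sq :
    selbergR =O[Filter.cocompact ℝ] fun x ↦ (1 + x ^ 2)⁻¹ :=
  Asymptotics.IsBigO.of_bound 1 <| by
    filter_upwards [tendsto_norm_cocompact_atTop.eventually_ge_atTop 2] with x hx
    simpa [abs_of_pos (by positivity : (0 : ℝ) < 1 + x ^ 2)] using abs_selbergR_le_of_two_le_abs hx

theorem integrable_selbergR : Integrable selbergR :=
  continuous_selbergR.locallyIntegrable.integrable_of_isBigO_cocompact
    selbergR_isBigO_inv_one_add_sq (integrable_inv_one_add_sq.integrableAtFilter _)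

/-- `R` is continuous, `R ∈ L¹(ℝ)`, and its Fourier transform
`R̂(t) = ∫ R(x) e^{-2πitx} dx` equals `1 - |t| + sin(2π|t|)/(2π)` for `|t| ≤ 1`
and `0` for `|t| > 1`. -/
theorem selbergR_fourier :
    Continuous selbergR ∧ Integrable selbergR ∧
      ∀ t : ℝ,
        (|t| ≤ 1 → 𝓕 (fun x : ℝ => (selbergR x : ℂ)) t =
          ((1 - |t| + Real.sin (2 * π * |t|) / (2 * π) : ℝ) : ℂ)) ∧
        (1 < |t| → 𝓕 (fun x : ℝ => (selbergR x : ℂ)) t = 0) := by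
  have hRHat : 𝓕 (fun t ↦ (selbergRHat t : ℂ)) = fun x ↦ (selbergR x : ℂ) :=
    funext fourier_selbergRHat
  have hR : 𝓕 (fun x ↦ (selbergR x : ℂ)) = fun t ↦ (selbergRHat t : ℂ) := by
    rw [← hRHat]
    exact (Complex.continuous_ofReal.comp continuous_selbergRHat).fourier_fourier_eq_of_even
      integrable_selbergRHat.ofReal (hRHat ▸ integrable_selbergR.ofReal)
      fun t ↦ by simp [selbergRHat_neg]
  refine ⟨continuous_selbergR, integrable_selbergR, fun t ↦ ⟨fun ht ↦ ?_, fun ht ↦ ?_⟩⟩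
  · simp [hR, selbergRHat, selbergProfile, ht]
  · simp [hR, selbergRHat_eq_zero_of_one_le_abs ht.le]
end
end

section
/- Let λ = 0.60729. Then λ − 1 + 2λ ∫_0^1 α (1 − λα + sin(2πλα)/(2π)) dα > 0. -/
/-!
For `y ≥ 0` the Taylor partial sums of `sin` and `cos` alternate around them; this follows by
induction, integrating the previous inequality from `0`. In particular
`sin y ≥ y - y³/3! + ⋯ - y¹⁵/15!`, so replacing `sin` by this polynomial can only decrease the
integral. The integral of the polynomial is computed termwise, and the resulting expression is a
polynomial in `π²` that the bounds `3.141592 < π < 3.141593` show to be positive. The margin is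
about `4 · 10⁻⁶`, which is why fifteenth-degree Taylor polynomials are needed.
-/

open Finset Real
open scoped Nat

noncomputable def sinPartialSum (n : ℕ) (x : ℝ) : ℝ :=
  ∑ k ∈ range n, (-1) ^ k * x ^ (2 * k + 1) / (2 * k + 1)!

noncomputable def cosPartialSum (n : ℕ) (x : ℝ) : ℝ :=
  ∑ k ∈ range n, (-1) ^ k * x ^ (2 * k) / (2 * k)!

lemma hasDerivAt_sinPartialSum (n : ℕ) (x : ℝ) :
    HasDerivAt (sinPartialSum n) (cosPartialSum n x) x := by
  refine (HasDerivAt.fun_sum fun k _ => ((hasDerivAt_pow (2 * k + 1) x).const_mul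
    ((-1 : ℝ) ^ k)).div_const ((2 * k + 1)! : ℝ)).congr_deriv (sum_congr rfl fun k _ => ?_)
  rw [Nat.add_sub_cancel, Nat.factorial_succ]
  push_cast
  field_simp

@[fun_prop]
lemma continuous_sinPartialSum (n : ℕ) : Continuous (sinPartialSum n) :=
  continuous_iff_continuousAt.2 fun x => (hasDerivAt_sinPartialSum n x).continuousAt

lemma hasDerivAt_cosPartialSum_succ (n : ℕ) (x : ℝ) :
    HasDerivAt (cosPartialSum (n + 1)) (-sinPartialSum n x) x := by
  have hsum : cosPartialSum (n + 1) =
      fun y : ℝ => ∑ k ∈ range n, (-1) ^ (k + 1) * y ^ (2 * k + 2) / (2 * k + 2)! + 1 := by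
    ext y
    simp [cosPartialSum, sum_range_succ', mul_add]
  rw [hsum, sinPartialSum, ← sum_neg_distrib]
  refine ((HasDerivAt.fun_sum fun k _ => ((hasDerivAt_pow (2 * k + 2) x).const_mul
    ((-1 : ℝ) ^ (k + 1))).div_const ((2 * k + 2)! : ℝ)).add_const 1).congr_deriv
    (sum_congr rfl fun k _ => ?_)
  rw [show 2 * k + 2 - 1 = 2 * k + 1 by omega,
    show (2 * k + 2)! = (2 * k + 2) * (2 * k + 1)! from Nat.factorial_succ _]
  push_cast
  field_simp
  ring

lemma nonneg_of_hasDerivAt_nonneg {f f' : ℝ → ℝ} (hf : ∀ x, HasDerivAt f (f' x) x)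
    (h₀ : f 0 = 0) (hf' : ∀ x, 0 ≤ x → 0 ≤ f' x) {x : ℝ} (hx : 0 ≤ x) : 0 ≤ f x := by
  have hmono : MonotoneOn f (Set.Ici 0) :=
    monotoneOn_of_hasDerivWithinAt_nonneg (convex_Ici 0)
      (fun y _ => (hf y).continuousAt.continuousWithinAt)
      (fun y _ => (hf y).hasDerivWithinAt)
      (fun y hy => hf' y (interior_subset (s := Set.Ici 0) hy))
  simpa [h₀] using hmono Set.self_mem_Ici hx hx

lemma sin_partialSum_alternating_of_cos {n : ℕ}
    (hcos : ∀ y, 0 ≤ y → 0 ≤ (-1) ^ n * (cosPartialSum (n + 1) y - cos y)) {x : ℝ}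
    (hx : 0 ≤ x) : 0 ≤ (-1) ^ n * (sinPartialSum (n + 1) x - sin x) :=
  nonneg_of_hasDerivAt_nonneg
    (fun y => ((hasDerivAt_sinPartialSum _ y).sub (hasDerivAt_sin y)).const_mul _)
    (by simp [sinPartialSum]) hcos hx

lemma cos_partialSum_alternating (n : ℕ) {x : ℝ} (hx : 0 ≤ x) :
    0 ≤ (-1) ^ n * (cosPartialSum (n + 1) x - cos x) := by
  induction n generalizing x with
  | zero => simpa [cosPartialSum] using cos_le_one x
  | succ n ih =>
    refine nonneg_of_hasDerivAt_nonneg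
      (fun y => ((hasDerivAt_cosPartialSum_succ _ y).sub (hasDerivAt_cos y)).const_mul _)
      (by simp [cosPartialSum, sum_range_succ']) (fun y hy => ?_) hx
    convert sin_partialSum_alternating_of_cos (fun _ hz => ih hz) hy using 1
    ring

lemma sin_partialSum_alternating (n : ℕ) {x : ℝ} (hx : 0 ≤ x) :
    0 ≤ (-1) ^ n * (sinPartialSum (n + 1) x - sin x) :=
  sin_partialSum_alternating_of_cos (fun _ hy => cos_partialSum_alternating n hy) hx

lemma sinPartialSum_le_sin (m : ℕ) {x : ℝ} (hx : 0 ≤ x) : sinPartialSum (2 * m + 2) x ≤ sin x := by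
  have := sin_partialSum_alternating (2 * m + 1) hx
  rw [pow_succ, pow_mul] at this
  norm_num at this
  linarith

lemma integral_mul_sinPartialSum (n : ℕ) (c : ℝ) :
    ∫ α in (0 : ℝ)..1, α * sinPartialSum n (c * α) =
      ∑ k ∈ range n, (-1) ^ k * c ^ (2 * k + 1) / ((2 * k + 1)! * (2 * k + 3)) := by
  simp_rw [sinPartialSum, mul_sum]
  rw [intervalIntegral.integral_finsetSum fun k _ =>
    (by fun_prop : Continuous _).intervalIntegrable _ _]
  refine sum_congr rfl fun k _ => ?_
  have : ∀ α : ℝ, α * ((-1) ^ k * (c * α) ^ (2 * k + 1) / (2 * k + 1)!) =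
      (-1) ^ k * c ^ (2 * k + 1) / (2 * k + 1)! * α ^ (2 * k + 2) := fun α => by ring
  simp_rw [this, intervalIntegral.integral_const_mul, integral_pow]
  push_cast
  field_simp
  ring

lemma integral_mul_one_sub_add_sinPartialSum (lam : ℝ) (n : ℕ) :
    ∫ α in (0 : ℝ)..1, α * (1 - lam * α + sinPartialSum n (2 * π * lam * α) / (2 * π)) =
      1 / 2 - lam / 3 + (∑ k ∈ range n, (-1) ^ k * (2 * π * lam) ^ (2 * k + 1) /
        ((2 * k + 1)! * (2 * k + 3) : ℝ)) / (2 * π) := by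
  have hsplit : ∀ α : ℝ, α * (1 - lam * α + sinPartialSum n (2 * π * lam * α) / (2 * π)) =
      α - lam * α ^ 2 + α * sinPartialSum n (2 * π * lam * α) / (2 * π) := fun α => by ring
  simp_rw [hsplit]
  rw [intervalIntegral.integral_add ((by fun_prop : Continuous _).intervalIntegrable _ _)
      ((by fun_prop : Continuous _).intervalIntegrable _ _),
    intervalIntegral.integral_sub ((by fun_prop : Continuous _).intervalIntegrable _ _)
      ((by fun_prop : Continuous _).intervalIntegrable _ _), intervalIntegral.integral_div,
    integral_mul_sinPartialSum, intervalIntegral.integral_const_mul, integral_id, integral_pow]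
  ring

lemma c_taylor_lower_bound_pos : 0 < (0.60729 : ℝ) - 1 + 2 * 0.60729 * (1 / 2 - 0.60729 / 3 +
    (∑ k ∈ range 8, (-1) ^ k * (2 * π * 0.60729) ^ (2 * k + 1) /
      ((2 * k + 1)! * (2 * k + 3) : ℝ)) / (2 * π)) := by
  have hlo : ∀ k : ℕ, (3.141592 : ℝ) ^ k ≤ π ^ k := fun k =>
    pow_le_pow_left₀ (by norm_num) pi_gt_d6.le k
  have hhi : ∀ k : ℕ, π ^ k ≤ (3.141593 : ℝ) ^ k := fun k =>
    pow_le_pow_left₀ pi_pos.le pi_lt_d6.le k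
  norm_num [sum_range_succ, Nat.factorial]
  -- the odd powers of `π` in the sum cancel against `2 * π`, leaving alternating powers of `π²`
  field_simp
  linarith [hhi 2, hlo 4, hhi 6, hlo 8, hhi 10, hlo 12, hhi 14]

/-- For `λ = 0.60729` one has
`λ - 1 + 2λ ∫₀¹ α (1 - λα + sin(2πλα)/(2π)) dα > 0`; this quantity is `c(λ; r)` for
`r(u) = R(u/λ)` with `R` Selberg's function. -/
theorem c_positive_at_point :
    0 < (0.60729 : ℝ) - 1 + 2 * 0.60729 *
      ∫ α in (0:ℝ)..1, α * (1 - 0.60729 * α + Real.sin (2 * π * 0.60729 * α) / (2 * π)) := by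
  have hminorant : ∫ α in (0:ℝ)..1, α * (1 - 0.60729 * α +
        sinPartialSum 8 (2 * π * 0.60729 * α) / (2 * π)) ≤
      ∫ α in (0:ℝ)..1, α * (1 - 0.60729 * α + Real.sin (2 * π * 0.60729 * α) / (2 * π)) := by
    refine intervalIntegral.integral_mono_on zero_le_one
      (Continuous.intervalIntegrable (by fun_prop) _ _)
      (Continuous.intervalIntegrable (by fun_prop) _ _) fun α ⟨hα, _⟩ => ?_
    gcongr
    exact sinPartialSum_le_sin 3 (by positivity)
  rw [integral_mul_one_sub_add_sinPartialSum] at hminorant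
  linarith [c_taylor_lower_bound_pos]
end

section
/- Let λ = 1.05214. Then λ − 1 + 2λ ∫_0^{1/λ} α (1 − λα + sin(2πλα)/(2π)) dα > 0.3208. -/
open scoped Real

/-- For `λ = 1.05214` one has
`λ - 1 + 2λ ∫₀^{1/λ} α (1 - λα + sin(2πλα)/(2π)) dα > 0.3208`; this quantity is `c(λ; r)`
for `r(u) = R(u/λ)` with `R` Selberg's function (here `λ > 1`, so `min(1, 1/λ) = 1/λ`). -/
theorem c_gt_at_point :
    0.3208 < (1.05214 : ℝ) - 1 + 2 * 1.05214 *
      ∫ α in (0:ℝ)..(1 / 1.05214),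
        α * (1 - 1.05214 * α + Real.sin (2 * π * 1.05214 * α) / (2 * π)) := by
  have hπ : (0:ℝ) < π := Real.pi_pos
  set a : ℝ := 2 * π * 1.05214 with ha
  have ha0 : a ≠ 0 := by positivity
  set F : ℝ → ℝ := fun α => α^2/2 - 1.05214*α^3/3 +
    (Real.sin (a*α)/a^2 - α * Real.cos (a*α)/a)/(2*π) with hF
  have hderiv : ∀ x ∈ Set.uIcc (0:ℝ) (1/1.05214),
      HasDerivAt F (x * (1 - 1.05214 * x + Real.sin (a * x) / (2*π))) x := by
    intro x _
    have h1 : HasDerivAt (fun α : ℝ => a * α) a x := by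
      simpa using (hasDerivAt_id x).const_mul a
    have hsin : HasDerivAt (fun α : ℝ => Real.sin (a*α)) (Real.cos (a*x) * a) x :=
      (Real.hasDerivAt_sin (a*x)).comp x h1
    have hcos : HasDerivAt (fun α : ℝ => Real.cos (a*α)) (-Real.sin (a*x) * a) x :=
      (Real.hasDerivAt_cos (a*x)).comp x h1
    have h2 : HasDerivAt (fun α : ℝ => α * Real.cos (a*α))
        (1 * Real.cos (a*x) + x * (-Real.sin (a*x) * a)) x :=
      (hasDerivAt_id x).mul hcos
    have h3 : HasDerivAt F
        ((2*x^1)/2 - 1.05214*(3*x^2)/3 +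
          ((Real.cos (a*x) * a)/a^2 - (1 * Real.cos (a*x) + x * (-Real.sin (a*x) * a))/a)/(2*π)) x := by
      exact (((hasDerivAt_pow 2 x).div_const 2).sub
        (((hasDerivAt_pow 3 x).const_mul 1.05214).div_const 3)).add
        (((hsin.div_const (a^2)).sub (h2.div_const a)).div_const (2*π))
    convert h3 using 1
    field_simp
    ring
  have hcont : Continuous fun α : ℝ => α * (1 - 1.05214 * α + Real.sin (a * α) / (2*π)) := by
    fun_prop
  have hint : ∫ α in (0:ℝ)..(1/1.05214),
      α * (1 - 1.05214*α + Real.sin (a*α)/(2*π)) = F (1/1.05214) - F 0 :=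
    intervalIntegral.integral_eq_sub_of_hasDerivAt hderiv (hcont.intervalIntegrable _ _)
  have haval : a * (1/1.05214) = 2 * π := by
    rw [ha]; field_simp
  have hF1 : F (1/1.05214) = (1/1.05214)^2/2 - 1.05214*(1/1.05214)^3/3 +
      (0/a^2 - (1/1.05214) * 1/a)/(2*π) := by
    rw [hF]; simp only [haval, Real.sin_two_pi, Real.cos_two_pi]
  have hF0 : F 0 = 0 := by
    rw [hF]; simp
  have hgoal : (1.05214:ℝ) - 1 + 2 * 1.05214 *
      ∫ α in (0:ℝ)..(1 / 1.05214),
        α * (1 - 1.05214 * α + Real.sin (a * α) / (2 * π))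
      = 1.05214 - 1 + 1/(3*1.05214) - 1/(2*π^2*1.05214) := by
    rw [hint, hF1, hF0, ha]
    field_simp
    ring
  rw [hgoal]
  have hπ' : π > 3.141592 := Real.pi_gt_d6
  rw [show (1.05214:ℝ) - 1 + 1/(3*1.05214) - 1/(2*π^2*1.05214)
      = 0.05214 + 1/3.15642 - 1/(2*π^2*1.05214) by norm_num]
  have h1 : (1:ℝ)/3.15642 > 0.3168146 := by norm_num
  have h2 : (1:ℝ)/(2*π^2*1.05214) < 0.0481501 := by
    rw [div_lt_iff₀ (by positivity)]
    nlinarith [hπ'.le]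
  linarith
end
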